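/- Fix x \in R^d and q \in (1/2,1). Let X, Y be random vectors in R^d such that F_q(X) contains a ball of radius R_min/2, both F_q(X) and F_q(Y) are contained in the ball of radius R_max + r centered at the origin, and \delta_q(X,Y) \le R_min/4. Then \|P_{F_q(X)}(x) - P_{F_q(Y)}(x)\|_2 \le 5 \sqrt{(\|x\|_2 + R_max + r)(R_max + r)/R_min} \cdot \delta_q(X,Y)^{1/2}. -/

import Mathlib

/-!
Write `δ = δ_q(X,Y)` and `R = R_max + r`. If `B(a, R_min/2) ⊆ F_q(X)`, then
`⟨a,θ⟩ + R_min/2 ≤ Q_q(⟨X,θ⟩)` in every direction, while the quantiles of `X` and `Y` differ by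
at most `δ`. So moving a point of either floating body towards `a` by the fraction
`t = 2δ/R_min ≤ 1/2` lands in the other floating body, at distance at most `2Rt`. Testing the
variational inequality of each nearest-point projection against the moved copy of the other
projection and adding the two gives `‖p₁ - p₂‖² ≤ 2(‖x‖ + R) ⋅ 2Rt = 8(‖x‖ + R)Rδ/R_min`.
-/

open MeasureTheory

/-- The CDF of a (law of a) real random variable. -/
noncomputable def rcdf (μ : Measure ℝ) (t : ℝ) : ℝ := (μ (Set.Iic t)).toReal

/-- The `q`-quantile `Q_q = inf {t : P(X ≤ t) ≥ q}`. -/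
noncomputable def quantile (μ : Measure ℝ) (q : ℝ) : ℝ := sInf {t | q ≤ rcdf μ t}

/-- The `q`-quantile of the marginal `⟨X, θ⟩` of a random vector with law `μ`. -/
noncomputable def dirQuantile {d : ℕ} (μ : Measure (EuclideanSpace ℝ (Fin d))) (q : ℝ)
    (θ : EuclideanSpace ℝ (Fin d)) : ℝ :=
  quantile (μ.map fun x => (inner ℝ x θ : ℝ)) q

/-- The `q`-floating body `F_q(X)`. -/
noncomputable def floatingBody {d : ℕ} (μ : Measure (EuclideanSpace ℝ (Fin d))) (q : ℝ) :
    Set (EuclideanSpace ℝ (Fin d)) :=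
  {x | ∀ θ : EuclideanSpace ℝ (Fin d), ‖θ‖ = 1 → (inner ℝ x θ : ℝ) ≤ dirQuantile μ q θ}

/-- The `q`-distance `δ_q(X,Y)`. -/
noncomputable def deltaQ {d : ℕ} (μ ν : Measure (EuclideanSpace ℝ (Fin d))) (q : ℝ) : ℝ :=
  ⨆ θ : Metric.sphere (0 : EuclideanSpace ℝ (Fin d)) 1,
    |dirQuantile μ q θ - dirQuantile ν q θ|

open Metric Set

lemma exists_lt_measureReal_closedBall {E : Type*} [PseudoMetricSpace E] [MeasurableSpace E]
    [OpensMeasurableSpace E] (μ : Measure E) [IsProbabilityMeasure μ] (x : E) {c : ℝ}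
    (hc : c < 1) : ∃ M : ℝ, c < μ.real (closedBall x M) := by
  have hmono : Monotone fun n : ℕ => closedBall x n :=
    fun m n hmn => closedBall_subset_closedBall (by exact_mod_cast hmn)
  have h := tendsto_measure_iUnion_atTop (μ := μ) hmono
  rw [iUnion_closedBall_nat, measure_univ] at h
  obtain ⟨n, hn⟩ := ((ENNReal.tendsto_toReal ENNReal.one_ne_top).comp h).eventually
    (lt_mem_nhds (by simpa using hc)) |>.exists
  exact ⟨n, hn⟩

lemma le_mul_sqrt_mul_sqrt_of_sq_le {s c A δ : ℝ} (hc : 0 ≤ c) (hA : 0 ≤ A)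
    (h : s ^ 2 ≤ c ^ 2 * A * δ) : s ≤ c * √A * √δ := by
  rw [← Real.sqrt_sq hc, ← Real.sqrt_mul (sq_nonneg c),
    ← Real.sqrt_mul (mul_nonneg (sq_nonneg c) hA)]
  exact (le_abs_self s).trans (Real.abs_le_sqrt h)

section InnerProductSpace

variable {F : Type*} [NormedAddCommGroup F] [InnerProductSpace ℝ F]

lemma inner_add_smul_sub_le {p a θ : F} {c ρ δ : ℝ} (hρ : 0 < ρ) (hδ : 0 ≤ δ) (hδρ : δ ≤ ρ)
    (hp : inner ℝ p θ ≤ c + δ) (ha : inner ℝ a θ + ρ ≤ c + δ) :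
    inner ℝ (p + (δ / ρ) • (a - p)) θ ≤ c := by
  have ht₀ : 0 ≤ δ / ρ := div_nonneg hδ hρ.le
  have ht₁ : 0 ≤ 1 - δ / ρ := sub_nonneg.2 ((div_le_one hρ).2 hδρ)
  have htρ : δ / ρ * ρ = δ := div_mul_cancel₀ δ hρ.ne'
  rw [inner_add_left, real_inner_smul_left, inner_sub_left]
  nlinarith [mul_le_mul_of_nonneg_left hp ht₁, mul_le_mul_of_nonneg_left ha ht₀]

lemma real_inner_sub_sub_nonpos_of_forall_norm_sub_le {K : Set F} (hK : Convex ℝ K) {x p z : F}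
    (hp : p ∈ K) (hmin : ∀ w ∈ K, ‖p - x‖ ≤ ‖w - x‖) (hz : z ∈ K) :
    inner ℝ (x - p) (z - p) ≤ 0 := by
  refine (norm_eq_iInf_iff_real_inner_le_zero hK hp).1 ?_ z hz
  have : Nonempty K := ⟨⟨p, hp⟩⟩
  refine le_antisymm (le_ciInf fun w => ?_)
    (ciInf_le ⟨0, forall_mem_range.2 fun _ => norm_nonneg _⟩ (⟨p, hp⟩ : K))
  simpa only [norm_sub_rev x] using hmin w w.2

lemma norm_sub_sq_le_of_forall_norm_sub_le {K₁ K₂ : Set F} (hK₁ : Convex ℝ K₁)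
    (hK₂ : Convex ℝ K₂) {x p₁ p₂ z₁ z₂ : F}
    (hp₁ : p₁ ∈ K₁) (hmin₁ : ∀ w ∈ K₁, ‖p₁ - x‖ ≤ ‖w - x‖)
    (hp₂ : p₂ ∈ K₂) (hmin₂ : ∀ w ∈ K₂, ‖p₂ - x‖ ≤ ‖w - x‖) (hz₁ : z₁ ∈ K₁) (hz₂ : z₂ ∈ K₂) :
    ‖p₁ - p₂‖ ^ 2 ≤ ‖x - p₁‖ * ‖p₂ - z₁‖ + ‖x - p₂‖ * ‖p₁ - z₂‖ := by
  have key {K : Set F} (hK : Convex ℝ K) {p p' z : F} (hp : p ∈ K)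
      (hmin : ∀ w ∈ K, ‖p - x‖ ≤ ‖w - x‖) (hz : z ∈ K) :
      inner ℝ (x - p) (p' - p) ≤ ‖x - p‖ * ‖p' - z‖ :=
    calc inner ℝ (x - p) (p' - p) = inner ℝ (x - p) (z - p) + inner ℝ (x - p) (p' - z) := by
          rw [← inner_add_right, sub_add_sub_cancel']
      _ ≤ 0 + ‖x - p‖ * ‖p' - z‖ :=
          add_le_add (real_inner_sub_sub_nonpos_of_forall_norm_sub_le hK hp hmin hz)
            (real_inner_le_norm _ _)
      _ = ‖x - p‖ * ‖p' - z‖ := zero_add _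
  have hsum : ‖p₁ - p₂‖ ^ 2 = inner ℝ (x - p₁) (p₂ - p₁) + inner ℝ (x - p₂) (p₁ - p₂) := by
    rw [← neg_sub p₂ p₁, inner_neg_right, ← sub_eq_add_neg, ← inner_sub_left,
      sub_sub_sub_cancel_left, real_inner_self_eq_norm_sq, norm_neg]
  rw [hsum]
  exact add_le_add (key hK₁ hp₁ hmin₁ hz₁) (key hK₂ hp₂ hmin₂ hz₂)

lemma norm_sub_sq_le_of_forall_norm_sub_le_of_norm_le {K₁ K₂ : Set F} (hK₁ : Convex ℝ K₁)
    (hK₂ : Convex ℝ K₂) {x p₁ p₂ z₁ z₂ : F} {R ε : ℝ}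
    (hp₁ : p₁ ∈ K₁) (hmin₁ : ∀ w ∈ K₁, ‖p₁ - x‖ ≤ ‖w - x‖)
    (hp₂ : p₂ ∈ K₂) (hmin₂ : ∀ w ∈ K₂, ‖p₂ - x‖ ≤ ‖w - x‖) (hp₁R : ‖p₁‖ ≤ R) (hp₂R : ‖p₂‖ ≤ R)
    (hz₁ : z₁ ∈ K₁) (hz₂ : z₂ ∈ K₂) (hε₁ : ‖p₂ - z₁‖ ≤ ε) (hε₂ : ‖p₁ - z₂‖ ≤ ε) :
    ‖p₁ - p₂‖ ^ 2 ≤ 2 * (‖x‖ + R) * ε := by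
  have hx₁ : ‖x - p₁‖ ≤ ‖x‖ + R := norm_sub_le_of_le le_rfl hp₁R
  have hx₂ : ‖x - p₂‖ ≤ ‖x‖ + R := norm_sub_le_of_le le_rfl hp₂R
  have hxR : 0 ≤ ‖x‖ + R := (norm_nonneg _).trans hx₁
  calc ‖p₁ - p₂‖ ^ 2 ≤ ‖x - p₁‖ * ‖p₂ - z₁‖ + ‖x - p₂‖ * ‖p₁ - z₂‖ :=
        norm_sub_sq_le_of_forall_norm_sub_le hK₁ hK₂ hp₁ hmin₁ hp₂ hmin₂ hz₁ hz₂
    _ ≤ (‖x‖ + R) * ε + (‖x‖ + R) * ε := by gcongr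
    _ = 2 * (‖x‖ + R) * ε := by ring

end InnerProductSpace

lemma quantile_mem_Icc {ν : Measure ℝ} [IsProbabilityMeasure ν] {q M : ℝ}
    (hq : q ≤ ν.real (Icc (-M) M)) (hq' : 1 - q < ν.real (Icc (-M) M)) :
    quantile ν q ∈ Icc (-M) M := by
  have hM : M ∈ {t | q ≤ rcdf ν t} := hq.trans (measureReal_mono Icc_subset_Iic_self)
  have hlow : ∀ t ∈ {t | q ≤ rcdf ν t}, -M ≤ t := by
    intro t ht
    by_contra! htM
    have hsub : Iic t ⊆ (Icc (-M) M)ᶜ := fun s hs hs' => by linarith [hs'.1, mem_Iic.1 hs]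
    have hcdf : rcdf ν t ≤ 1 - ν.real (Icc (-M) M) :=
      (measureReal_mono hsub).trans (probReal_compl_eq_one_sub measurableSet_Icc).le
    have ht' : q ≤ rcdf ν t := ht
    linarith
  exact ⟨le_csInf ⟨M, hM⟩ hlow, csInf_le ⟨-M, hlow⟩ hM⟩

/-- `deltaQ` is a supremum of reals, hence `0` unless the quantiles are bounded: for `0 < q < 1`
they are, uniformly in `θ`, since a ball of mass `> max q (1 - q)` pins each directional quantile
to `[-M, M]`. -/
lemma exists_forall_abs_dirQuantile_le {d : ℕ} {q : ℝ} (hq : q ∈ Ioo 0 1)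
    (μ : Measure (EuclideanSpace ℝ (Fin d))) [IsProbabilityMeasure μ] :
    ∃ M : ℝ, ∀ θ : EuclideanSpace ℝ (Fin d), ‖θ‖ ≤ 1 → |dirQuantile μ q θ| ≤ M := by
  obtain ⟨M, hM⟩ :=
    exists_lt_measureReal_closedBall μ 0 (max_lt hq.2 (show 1 - q < 1 by linarith [hq.1]))
  refine ⟨M, fun θ hθ => ?_⟩
  have := Measure.isProbabilityMeasure_map (μ := μ) (f := fun x => inner ℝ x θ) (by fun_prop)
  refine abs_le.2 (quantile_mem_Icc ?_ ?_) <;>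
  · have hball : μ.real (closedBall 0 M) ≤ (μ.map fun x => inner ℝ x θ).real (Icc (-M) M) := by
      rw [map_measureReal_apply (by fun_prop) measurableSet_Icc]
      refine measureReal_mono fun y hy => abs_le.1 ?_
      calc |inner ℝ y θ| ≤ ‖y‖ * ‖θ‖ := abs_real_inner_le_norm y θ
        _ ≤ M * 1 := mul_le_mul (mem_closedBall_zero_iff.1 hy) hθ (norm_nonneg θ)
            (dist_nonneg.trans hy)
        _ = M := mul_one M
    linarith [le_max_left q (1 - q), le_max_right q (1 - q)]

lemma deltaQ_nonneg {d : ℕ} (μ ν : Measure (EuclideanSpace ℝ (Fin d))) (q : ℝ) :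
    0 ≤ deltaQ μ ν q :=
  Real.iSup_nonneg fun _ => abs_nonneg _

lemma abs_dirQuantile_sub_le_deltaQ {d : ℕ} {q : ℝ} (hq : q ∈ Ioo 0 1)
    (μ ν : Measure (EuclideanSpace ℝ (Fin d))) [IsProbabilityMeasure μ] [IsProbabilityMeasure ν]
    {θ : EuclideanSpace ℝ (Fin d)} (hθ : ‖θ‖ = 1) :
    |dirQuantile μ q θ - dirQuantile ν q θ| ≤ deltaQ μ ν q := by
  obtain ⟨M₁, hM₁⟩ := exists_forall_abs_dirQuantile_le hq μ
  obtain ⟨M₂, hM₂⟩ := exists_forall_abs_dirQuantile_le hq ν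
  refine le_ciSup (f := fun θ : sphere (0 : EuclideanSpace ℝ (Fin d)) 1 =>
    |dirQuantile μ q θ - dirQuantile ν q θ|) ⟨M₁ + M₂, ?_⟩ ⟨θ, mem_sphere_zero_iff_norm.2 hθ⟩
  rintro _ ⟨θ', rfl⟩
  have hθ' : ‖(θ' : EuclideanSpace ℝ (Fin d))‖ ≤ 1 := (mem_sphere_zero_iff_norm.1 θ'.2).le
  exact (abs_sub _ _).trans (add_le_add (hM₁ _ hθ') (hM₂ _ hθ'))

lemma convex_floatingBody {d : ℕ} (μ : Measure (EuclideanSpace ℝ (Fin d))) (q : ℝ) :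
    Convex ℝ (floatingBody μ q) := by
  simp only [floatingBody, ofPred_forall]
  exact convex_iInter fun θ => convex_iInter fun _ =>
    convex_halfSpace_le ((innerₗ _).flip θ).isLinear _


lemma inner_add_le_dirQuantile_of_closedBall_subset {d : ℕ}
    {μ : Measure (EuclideanSpace ℝ (Fin d))} {q ρ : ℝ} {a θ : EuclideanSpace ℝ (Fin d)}
    (hρ : 0 ≤ ρ) (h : closedBall a ρ ⊆ floatingBody μ q) (hθ : ‖θ‖ = 1) :
    inner ℝ a θ + ρ ≤ dirQuantile μ q θ := by
  have hmem : a + ρ • θ ∈ closedBall a ρ := by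
    rw [mem_closedBall, dist_eq_norm, add_sub_cancel_left, norm_smul, hθ, mul_one,
      Real.norm_of_nonneg hρ]
  have := h hmem θ hθ
  rwa [inner_add_left, real_inner_smul_left, real_inner_self_eq_norm_sq, hθ, one_pow,
    mul_one] at this

lemma exists_mem_floatingBody_norm_sub_le {d : ℕ} {μ ν : Measure (EuclideanSpace ℝ (Fin d))}
    {q ρ δ : ℝ} {a p : EuclideanSpace ℝ (Fin d)} (hρ : 0 < ρ) (hδ : 0 ≤ δ) (hδρ : δ ≤ ρ)
    (hQ : ∀ θ, ‖θ‖ = 1 → dirQuantile ν q θ ≤ dirQuantile μ q θ + δ)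
    (ha : ∀ θ, ‖θ‖ = 1 → inner ℝ a θ + ρ ≤ dirQuantile μ q θ + δ)
    (hp : p ∈ floatingBody ν q) :
    ∃ z ∈ floatingBody μ q, ‖p - z‖ ≤ δ / ρ * ‖a - p‖ := by
  refine ⟨p + (δ / ρ) • (a - p), fun θ hθ => ?_, ?_⟩
  · exact inner_add_smul_sub_le hρ hδ hδρ ((hp θ hθ).trans (hQ θ hθ)) (ha θ hθ)
  · rw [sub_add_cancel_left, norm_neg, norm_smul, Real.norm_of_nonneg (div_nonneg hδ hρ.le)]

theorem stmt_14_general {d : ℕ} (q Rmin Rmax r : ℝ) (hq : q ∈ Set.Ioo (1 / 2 : ℝ) 1)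
    (hRmin : 0 < Rmin)
    (μ ν : Measure (EuclideanSpace ℝ (Fin d))) [IsProbabilityMeasure μ] [IsProbabilityMeasure ν]
    (hball : ∃ a, Metric.closedBall a (Rmin / 2) ⊆ floatingBody μ q)
    (hcontX : floatingBody μ q ⊆ Metric.closedBall 0 (Rmax + r))
    (hcontY : floatingBody ν q ⊆ Metric.closedBall 0 (Rmax + r))
    (hδ : deltaQ μ ν q ≤ Rmin / 4)
    (x p₁ p₂ : EuclideanSpace ℝ (Fin d))
    (hp₁ : p₁ ∈ floatingBody μ q ∧ ∀ z ∈ floatingBody μ q, ‖p₁ - x‖ ≤ ‖z - x‖)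
    (hp₂ : p₂ ∈ floatingBody ν q ∧ ∀ z ∈ floatingBody ν q, ‖p₂ - x‖ ≤ ‖z - x‖) :
    ‖p₁ - p₂‖ ≤
      5 * Real.sqrt ((‖x‖ + Rmax + r) * (Rmax + r) / Rmin) * Real.sqrt (deltaQ μ ν q) := by
  obtain ⟨a, ha⟩ := hball
  set δ := deltaQ μ ν q
  set R := Rmax + r
  have hρ : 0 < Rmin / 2 := by positivity
  have hδ₀ : 0 ≤ δ := deltaQ_nonneg μ ν q
  have hQ (θ : EuclideanSpace ℝ (Fin d)) (hθ : ‖θ‖ = 1) :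
      dirQuantile μ q θ - dirQuantile ν q θ ≤ δ ∧ dirQuantile ν q θ - dirQuantile μ q θ ≤ δ :=
    abs_sub_le_iff.1 (abs_dirQuantile_sub_le_deltaQ ⟨by linarith [hq.1], hq.2⟩ μ ν hθ)
  have haQ (θ : EuclideanSpace ℝ (Fin d)) (hθ : ‖θ‖ = 1) :
      inner ℝ a θ + Rmin / 2 ≤ dirQuantile μ q θ :=
    inner_add_le_dirQuantile_of_closedBall_subset hρ.le ha hθ
  obtain ⟨z₁, hz₁, hpz₁⟩ := exists_mem_floatingBody_norm_sub_le (μ := μ) (a := a) hρ hδ₀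
    (by linarith) (fun θ hθ => by linarith [(hQ θ hθ).2]) (fun θ hθ => by linarith [haQ θ hθ]) hp₂.1
  obtain ⟨z₂, hz₂, hpz₂⟩ := exists_mem_floatingBody_norm_sub_le (μ := ν) (a := a) hρ hδ₀
    (by linarith) (fun θ hθ => by linarith [(hQ θ hθ).1])
    (fun θ hθ => by linarith [haQ θ hθ, (hQ θ hθ).1]) hp₁.1
  have hp₁R : ‖p₁‖ ≤ R := mem_closedBall_zero_iff.1 (hcontX hp₁.1)
  have hp₂R : ‖p₂‖ ≤ R := mem_closedBall_zero_iff.1 (hcontY hp₂.1)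
  have haR : ‖a‖ ≤ R := mem_closedBall_zero_iff.1 (hcontX (ha (mem_closedBall_self hρ.le)))
  have hsq := norm_sub_sq_le_of_forall_norm_sub_le_of_norm_le (ε := δ / (Rmin / 2) * (R + R))
    (convex_floatingBody μ q) (convex_floatingBody ν q) hp₁.1 hp₁.2 hp₂.1 hp₂.2 hp₁R hp₂R hz₁ hz₂
    (hpz₁.trans (by gcongr; exact norm_sub_le_of_le haR hp₂R))
    (hpz₂.trans (by gcongr; exact norm_sub_le_of_le haR hp₁R))
  have hR : 0 ≤ R := (norm_nonneg a).trans haR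
  have hA : 0 ≤ (‖x‖ + Rmax + r) * (Rmax + r) / Rmin :=
    div_nonneg (mul_nonneg (by linarith [norm_nonneg x]) hR) hRmin.le
  refine le_mul_sqrt_mul_sqrt_of_sq_le (by norm_num) hA ?_
  calc ‖p₁ - p₂‖ ^ 2 ≤ 2 * (‖x‖ + R) * (δ / (Rmin / 2) * (R + R)) := hsq
    _ = 8 * ((‖x‖ + Rmax + r) * (Rmax + r) / Rmin) * δ := by
        simp only [R]
        field_simp
        ring
    _ ≤ 5 ^ 2 * ((‖x‖ + Rmax + r) * (Rmax + r) / Rmin) * δ :=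
        mul_le_mul_of_nonneg_right (mul_le_mul_of_nonneg_right (by norm_num) hA) hδ₀

/-- 1/2-Hölder continuity of the projection onto the floating body: under the stated
containment conditions and `δ_q(X,Y) ≤ R_min/4`,
`‖P_{F_q(X)}(x) - P_{F_q(Y)}(x)‖ ≤ 5 √((‖x‖ + R_max + r)(R_max + r)/R_min) ⋅ δ_q(X,Y)^{1/2}`. -/
theorem stmt_14 {d : ℕ} (q Rmin Rmax r : ℝ) (hq : q ∈ Set.Ioo (1 / 2 : ℝ) 1)
    (hRmin : 0 < Rmin) (hRmax : 0 < Rmax) (hr : 0 < r)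
    (μ ν : Measure (EuclideanSpace ℝ (Fin d))) [IsProbabilityMeasure μ] [IsProbabilityMeasure ν]
    (hball : ∃ a, Metric.closedBall a (Rmin / 2) ⊆ floatingBody μ q)
    (hcontX : floatingBody μ q ⊆ Metric.closedBall 0 (Rmax + r))
    (hcontY : floatingBody ν q ⊆ Metric.closedBall 0 (Rmax + r))
    (hδ : deltaQ μ ν q ≤ Rmin / 4)
    (x p₁ p₂ : EuclideanSpace ℝ (Fin d))
    (hp₁ : p₁ ∈ floatingBody μ q ∧ ∀ z ∈ floatingBody μ q, ‖p₁ - x‖ ≤ ‖z - x‖)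
    (hp₂ : p₂ ∈ floatingBody ν q ∧ ∀ z ∈ floatingBody ν q, ‖p₂ - x‖ ≤ ‖z - x‖) :
    ‖p₁ - p₂‖ ≤
      5 * Real.sqrt ((‖x‖ + Rmax + r) * (Rmax + r) / Rmin) * Real.sqrt (deltaQ μ ν q) :=
  stmt_14_general q Rmin Rmax r hq hRmin μ ν hball hcontX hcontY hδ x p₁ p₂ hp₁ hp₂
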